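/- Let α be a unit speed surface curve with τ_g nowhere zero. Define G(s) = exp(∫(k_g k_n / τ_g)ds), y₁(s) = G(s)[c₉ − ∫G(s)^{-1}ds], y₃(s) = (k_g/τ_g)y₁(s), y₂ = 0. Then y₁' − k_g y₂ − k_n y₃ + 1 = 0 and y₂' + k_g y₁ − τ_g y₃ = 0, so γ(s) = α(s) + y₁(s)T(s) + y₃(s)U(s) satisfies γ'(s) parallel to U(s). -/

import Mathlib

/-!
Only the `T`- and `U`-components of the Darboux frame occur in `γ = α + y₁ T + y₃ U`, and
differentiating gives `γ' = (1 + y₁' - k_n y₃) T + (k_g y₁ - τ_g y₃) V + (y₃' + k_n y₁) U`.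
The choice `y₃ = (k_g/τ_g) y₁` kills the `V`-component, and `y₁ = G (c₉ - ∫ G⁻¹)` solves the
linear equation `y₁' = (k_g k_n/τ_g) y₁ - 1`, which is exactly the vanishing of the `T`-component.
-/

open Real

section DarbouxFrame

variable {E : Type*} [NormedAddCommGroup E] [NormedSpace ℝ E]

theorem hasDerivAt_add_smul_tangent_add_smul_normal {α T V U : ℝ → E} {a b : ℝ → ℝ}
    {kg kn tg a' b' s : ℝ} (hα : HasDerivAt α (T s) s)
    (hT : HasDerivAt T (kg • V s + kn • U s) s) (hU : HasDerivAt U ((-kn) • T s + (-tg) • V s) s)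
    (ha : HasDerivAt a a' s) (hb : HasDerivAt b b' s) :
    HasDerivAt (fun s => α s + a s • T s + b s • U s)
      ((1 + a' - kn * b s) • T s + (kg * a s - tg * b s) • V s + (b' + kn * a s) • U s) s :=
  ((hα.add (ha.smul hT)).add (hb.smul hU)).congr_deriv (by module)

end DarbouxFrame

theorem hasDerivAt_exp_mul_const_sub {G H : ℝ → ℝ} {p c s : ℝ} (hG : HasDerivAt G p s)
    (hH : HasDerivAt H (exp (G s))⁻¹ s) :
    HasDerivAt (fun s => exp (G s) * (c - H s)) (p * (exp (G s) * (c - H s)) - 1) s :=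
  (hG.exp.mul (hH.const_sub c)).congr_deriv (by field_simp; ring)

theorem stmt_15_general
    (α T V U γ : ℝ → EuclideanSpace ℝ (Fin 3)) (kg kn tg y₁ y₂ y₃ G H : ℝ → ℝ) (c₉ : ℝ)
    (hα : Differentiable ℝ α) (hT : Differentiable ℝ T)
    (hU : Differentiable ℝ U)
    (hkgd : Differentiable ℝ kg) (htgd : Differentiable ℝ tg)
    (hαT : ∀ s, deriv α s = T s)
    (hdT : ∀ s, deriv T s = kg s • V s + kn s • U s)
    (hdU : ∀ s, deriv U s = (-kn s) • T s + (-tg s) • V s)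
    (htg : ∀ s, tg s ≠ 0)
    -- G is an antiderivative of k_g k_n / τ_g, and H an antiderivative of exp(G)⁻¹
    (hG : ∀ s, HasDerivAt G (kg s * kn s / tg s) s)
    (hH : ∀ s, HasDerivAt H ((Real.exp (G s))⁻¹) s)
    (hy₁ : ∀ s, y₁ s = Real.exp (G s) * (c₉ - H s))
    (hy₃ : ∀ s, y₃ s = (kg s / tg s) * y₁ s)
    (hy₂ : ∀ s, y₂ s = 0)
    (hγ : ∀ s, γ s = α s + y₁ s • T s + y₃ s • U s) :
    (∀ s, deriv y₁ s - kg s * y₂ s - kn s * y₃ s + 1 = 0) ∧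
    (∀ s, deriv y₂ s + kg s * y₁ s - tg s * y₃ s = 0) ∧
    (∃ r : ℝ → ℝ, ∀ s, deriv γ s = r s • U s) := by
  have hy₁' s : HasDerivAt y₁ (kg s * kn s / tg s * y₁ s - 1) s := by
    rw [hy₁ s, funext hy₁]
    exact hasDerivAt_exp_mul_const_sub (hG s) (hH s)
  have hy₃' : Differentiable ℝ y₃ := by
    rw [funext hy₃]
    exact (hkgd.div htgd htg).mul fun s => (hy₁' s).differentiableAt
  have tangent_eq s : 1 + (kg s * kn s / tg s * y₁ s - 1) - kn s * y₃ s = 0 := by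
    rw [hy₃]; ring
  have normal_eq s : kg s * y₁ s - tg s * y₃ s = 0 := by
    rw [hy₃]; field_simp [htg s]; ring
  refine ⟨fun s => ?_, fun s => ?_, ⟨fun s => deriv y₃ s + kn s * y₁ s, fun s => ?_⟩⟩
  · rw [(hy₁' s).deriv, hy₂]; linear_combination tangent_eq s
  · rw [funext hy₂, deriv_const, zero_add, normal_eq]
  · have hγ' := hasDerivAt_add_smul_tangent_add_smul_normal
      (hαT s ▸ (hα s).hasDerivAt) (hdT s ▸ (hT s).hasDerivAt) (hdU s ▸ (hU s).hasDerivAt)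
      (hy₁' s) (hy₃' s).hasDerivAt
    rw [funext hγ, hγ'.deriv, tangent_eq, normal_eq, zero_smul, zero_smul, zero_add, zero_add]

/-- ICC-associated helix of type 2, case `τ_g ≠ 0`. -/
theorem stmt_15
    (α T V U γ : ℝ → EuclideanSpace ℝ (Fin 3)) (kg kn tg y₁ y₂ y₃ G H : ℝ → ℝ) (c₉ : ℝ)
    (hα : Differentiable ℝ α) (hT : Differentiable ℝ T)
    (hV : Differentiable ℝ V) (hU : Differentiable ℝ U)
    (hkgd : Differentiable ℝ kg) (hknd : Differentiable ℝ kn) (htgd : Differentiable ℝ tg)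
    (hαT : ∀ s, deriv α s = T s)
    (hdT : ∀ s, deriv T s = kg s • V s + kn s • U s)
    (hdV : ∀ s, deriv V s = (-kg s) • T s + tg s • U s)
    (hdU : ∀ s, deriv U s = (-kn s) • T s + (-tg s) • V s)
    (htg : ∀ s, tg s ≠ 0)
    -- G is an antiderivative of k_g k_n / τ_g, and H an antiderivative of exp(G)⁻¹
    (hG : ∀ s, HasDerivAt G (kg s * kn s / tg s) s)
    (hH : ∀ s, HasDerivAt H ((Real.exp (G s))⁻¹) s)
    (hy₁ : ∀ s, y₁ s = Real.exp (G s) * (c₉ - H s))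
    (hy₃ : ∀ s, y₃ s = (kg s / tg s) * y₁ s)
    (hy₂ : ∀ s, y₂ s = 0)
    (hγ : ∀ s, γ s = α s + y₁ s • T s + y₃ s • U s) :
    (∀ s, deriv y₁ s - kg s * y₂ s - kn s * y₃ s + 1 = 0) ∧
    (∀ s, deriv y₂ s + kg s * y₁ s - tg s * y₃ s = 0) ∧
    (∃ r : ℝ → ℝ, ∀ s, deriv γ s = r s • U s) :=
  stmt_15_general α T V U γ kg kn tg y₁ y₂ y₃ G H c₉ hα hT hU hkgd htgd hαT hdT hdU htg hG hH hy₁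
    hy₃ hy₂ hγ
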